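/- arXiv:0706.3246 — 6 statements merged into one kernel-verified Lean document; each statement's English description precedes it below -/
import Mathlib

section
/- If G is a finite group with trivial center, then the centralizer of the derived subgroup is contained in the derived subgroup: C_G(G') ≤ G'. -/
/-!
The centralizer `C` of `G'` is abelian by the three subgroups lemma, and `G` acts on it by
conjugation through the abelian group `G / G'`. Hence the maps `c ↦ ⁅g, c⁆` are pairwise commuting
endomorphisms of the finite `ℤ`-module `C`, and their common kernel is `C ∩ Z(G) = 1`.

For pairwise commuting endomorphisms of an Artinian module with trivial common kernel the ranges
span the module: by Fitting's lemma `N = (N ⊓ ker fⁿ) ⊔ f(N)`, and on `N ⊓ ker fⁿ`, where `f` is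
nilpotent, the remaining endomorphisms still have trivial common kernel. So `C` is generated by
commutators `⁅g, c⁆`, which lie in `G'`.
-/
namespace Module.End

variable {R M : Type*} [Ring R] [AddCommGroup M] [Module R M]

theorem pow_mem_invtSubmodule {f : End R M} {N : Submodule R M} (hN : N ∈ f.invtSubmodule)
    (n : ℕ) : N ∈ (f ^ n).invtSubmodule := by
  induction n with
  | zero => simp
  | succ n ih => rw [pow_succ]; exact invtSubmodule.comp _ ih hN

theorem ker_mem_invtSubmodule_of_commute {f g : End R M} (h : Commute f g) :
    LinearMap.ker g ∈ f.invtSubmodule := fun x (hx : g x = 0) => by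
  change g (f x) = 0
  rw [← mul_apply, ← h.eq, mul_apply, hx, map_zero]

theorem exists_le_inf_ker_pow_sup_map [IsArtinian R M] (f : End R M) {N : Submodule R M}
    (hN : N ∈ f.invtSubmodule) : ∃ n, N ≤ (N ⊓ LinearMap.ker (f ^ n)) ⊔ N.map f := by
  have hanti : Antitone fun k => N.map (f ^ k) := by
    refine antitone_nat_of_succ_le fun k => ?_
    rw [pow_succ, Module.End.mul_eq_comp, Submodule.map_comp]
    exact Submodule.map_mono ((mem_invtSubmodule_iff_map_le f).mp hN)
  obtain ⟨n, hn⟩ :=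
    IsArtinian.monotone_stabilizes ⟨fun k => OrderDual.toDual (N.map (f ^ k)), hanti⟩
  refine ⟨n + 1, fun x hx => ?_⟩
  have hstab : N.map (f ^ (n + 1)) = N.map (f ^ (n + 1 + (n + 1))) :=
    (hn (n + 1) (by omega)).symm.trans (hn _ (by omega))
  obtain ⟨y, hy, hxy⟩ : (f ^ (n + 1)) x ∈ N.map (f ^ (n + 1 + (n + 1))) :=
    hstab ▸ Submodule.mem_map_of_mem hx
  have hfy : (f ^ (n + 1)) y ∈ N := pow_mem_invtSubmodule hN _ hy
  rw [← sub_add_cancel x ((f ^ (n + 1)) y)]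
  refine Submodule.add_mem_sup ⟨N.sub_mem hx hfy, ?_⟩ ?_
  · rw [SetLike.mem_coe, LinearMap.mem_ker, map_sub, ← mul_apply, ← pow_add, hxy, sub_self]
  · rw [pow_succ', mul_apply]
    exact Submodule.mem_map_of_mem (pow_mem_invtSubmodule hN n hy)

theorem eq_bot_of_le_ker_pow_of_inf_ker_eq_bot {f : End R M} {K : Submodule R M}
    (hK : K ∈ f.invtSubmodule) {n : ℕ} (hn : K ≤ LinearMap.ker (f ^ n))
    (hker : K ⊓ LinearMap.ker f = ⊥) : K = ⊥ := by
  suffices ∀ n, ∀ x ∈ K, (f ^ n) x = 0 → x = 0 from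
    eq_bot_iff.mpr fun x hx => (Submodule.mem_bot R).mpr (this n x hx (hn hx))
  intro n
  induction n with
  | zero => simp
  | succ n ih =>
    intro x hx hfx
    have hfx0 : f x = 0 := ih (f x) (hK hx) (by rwa [pow_succ, mul_apply] at hfx)
    exact (Submodule.mem_bot R).mp (hker ▸ ⟨hx, hfx0⟩)

theorem iInf_mem_invtSubmodule {ι : Sort*} {f : End R M} {p : ι → Submodule R M}
    (h : ∀ i, p i ∈ f.invtSubmodule) : (⨅ i, p i) ∈ f.invtSubmodule := fun _ hx =>
  (Submodule.mem_iInf p).mpr fun i => h i ((Submodule.mem_iInf p).mp hx i)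

theorem le_iSup_map_of_inf_iInf_ker_eq_bot [IsArtinian R M] {ι : Type*} {f : ι → End R M}
    (hf : ∀ i j, Commute (f i) (f j)) (s : Finset ι) {N : Submodule R M}
    (hN : ∀ i ∈ s, N ∈ (f i).invtSubmodule)
    (hker : N ⊓ ⨅ i ∈ s, LinearMap.ker (f i) = ⊥) : N ≤ ⨆ i ∈ s, N.map (f i) := by
  classical
  induction s using Finset.induction_on generalizing N with
  | empty => simp_all
  | insert i s _ ih =>
    obtain ⟨n, hn⟩ := exists_le_inf_ker_pow_sup_map (f i) (hN i (s.mem_insert_self i))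
    set N₀ := N ⊓ LinearMap.ker (f i ^ n)
    have hN₀ : ∀ j ∈ insert i s, N₀ ∈ (f j).invtSubmodule := fun j hj =>
      invtSubmodule.inf_mem (hN j hj) (ker_mem_invtSubmodule_of_commute ((hf j i).pow_right n))
    -- `f i` is nilpotent on `N₀` and injective on `N₀ ⊓ ⨅ j ∈ s, ker (f j)`.
    have hker₀ : N₀ ⊓ ⨅ j ∈ s, LinearMap.ker (f j) = ⊥ := by
      refine eq_bot_of_le_ker_pow_of_inf_ker_eq_bot (f := f i) (n := n) ?_
        (inf_le_left.trans inf_le_right) ?_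
      · exact invtSubmodule.inf_mem (hN₀ i (s.mem_insert_self i)) (iInf_mem_invtSubmodule
          fun j => iInf_mem_invtSubmodule fun _ => ker_mem_invtSubmodule_of_commute (hf i j))
      · rw [eq_bot_iff, ← hker, Finset.iInf_insert]
        exact le_inf (inf_le_left.trans (inf_le_left.trans inf_le_left))
          (le_inf inf_le_right (inf_le_left.trans inf_le_right))
    calc N ≤ N₀ ⊔ N.map (f i) := hn
      _ ≤ (⨆ j ∈ s, N₀.map (f j)) ⊔ N.map (f i) :=
        sup_le_sup_right (ih (fun j hj => hN₀ j (Finset.mem_insert_of_mem hj)) hker₀) _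
      _ ≤ (⨆ j ∈ s, N.map (f j)) ⊔ N.map (f i) := by
        gcongr
        exact inf_le_left
      _ = ⨆ j ∈ insert i s, N.map (f j) := by rw [Finset.iSup_insert, sup_comm]

theorem iSup_range_eq_top_of_iInf_ker_eq_bot [IsArtinian R M] {ι : Type*} [Finite ι]
    {f : ι → End R M} (hf : ∀ i j, Commute (f i) (f j))
    (hker : ⨅ i, LinearMap.ker (f i) = ⊥) : ⨆ i, LinearMap.range (f i) = ⊤ := by
  have := Fintype.ofFinite ι
  simpa using
    le_iSup_map_of_inf_iInf_ker_eq_bot hf Finset.univ (N := ⊤) (by simp) (by simpa using hker)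

end Module.End

open scoped IsMulCommutative commutatorElement

namespace Subgroup

variable {G : Type*} [Group G]

theorem isMulCommutative_centralizer_commutator (hZ : center G = ⊥) :
    IsMulCommutative (centralizer (_root_.commutator G : Set G)) :=
  commutator_self_eq_bot_iff.mp <|
    le_bot_iff.mp (hZ ▸ commutator_centralizer_commutator_le_center G)

variable (A : Subgroup G) [A.Normal] [IsMulCommutative A]

def commutatorEnd (g : G) : Module.End ℤ (Additive A) :=
  (MonoidHom.toAdditive (MulAut.conjNormal g).toMonoidHom).toIntLinearMap - 1

theorem commutatorEnd_apply (g : G) (x : Additive A) :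
    ((A.commutatorEnd g x).toMul : G) = ⁅g, (x.toMul : G)⁆ := by
  simp [commutatorEnd, commutatorElement_def, MulAut.conjNormal_apply, div_eq_mul_inv]

theorem iSup_range_commutatorEnd_le :
    ⨆ g, LinearMap.range (A.commutatorEnd g) ≤
      ((_root_.commutator G).subgroupOf A).toAddSubgroup.toIntSubmodule :=
  iSup_le fun g => by
    rintro _ ⟨x, rfl⟩
    change ((A.commutatorEnd g x).toMul : G) ∈ _root_.commutator G
    rw [commutatorEnd_apply]
    exact commutator_mem_commutator (mem_top g) (mem_top _)

theorem commute_commutatorEnd (hA : A ≤ centralizer (_root_.commutator G)) (g h : G) :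
    Commute (A.commutatorEnd g) (A.commutatorEnd h) := by
  refine (Commute.sub_right ?_ (Commute.one_right _)).sub_left (Commute.one_left _)
  ext x
  simp only [MulEquiv.toMonoidHom_eq_coe, Module.End.mul_apply, AddMonoidHom.coe_toIntLinearMap,
    MonoidHom.toAdditive_apply_apply, MonoidHom.coe_coe, toMul_ofMul, MulAut.conjNormal_apply]
  -- `g * h` and `h * g` differ by `⁅g⁻¹, h⁻¹⁆ ∈ G'`, which commutes with `A`.
  have hx := mem_centralizer_iff.mp (hA (Additive.toMul x).2) ⁅g⁻¹, h⁻¹⁆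
    (commutator_mem_commutator (mem_top _) (mem_top _))
  calc _ = h * g * (⁅g⁻¹, h⁻¹⁆ * ((Additive.toMul x : A) : G)) * h⁻¹ * g⁻¹ := by
        rw [commutatorElement_def]; group
    _ = _ := by rw [hx, commutatorElement_def]; group

theorem iInf_ker_commutatorEnd_eq_bot (hZ : center G = ⊥) :
    ⨅ g, LinearMap.ker (A.commutatorEnd g) = ⊥ := by
  refine eq_bot_iff.mpr fun x hx => ?_
  have hx' : ∀ g, ⁅g, (x.toMul : G)⁆ = 1 := fun g => by
    rw [← commutatorEnd_apply, (Submodule.mem_iInf _).mp hx g]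
    rfl
  have : (x.toMul : G) ∈ center G := mem_center_iff.mpr fun g =>
    (commutatorElement_eq_one_iff_mul_comm.mp (hx' g))
  rw [hZ, mem_bot] at this
  simpa using this

end Subgroup

theorem stmt_4 (G : Type*) [Group G] [Finite G]
    (hZ : Subgroup.center G = ⊥) :
    Subgroup.centralizer (commutator G : Set G) ≤ commutator G := by
  set C := Subgroup.centralizer (commutator G : Set G)
  have := Subgroup.isMulCommutative_centralizer_commutator hZ
  have : IsArtinian ℤ (Additive C) := isArtinian_of_finite
  have hspan := Module.End.iSup_range_eq_top_of_iInf_ker_eq_bot (C.commute_commutatorEnd le_rfl)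
    (C.iInf_ker_commutatorEnd_eq_bot hZ)
  intro c hc
  exact (hspan ▸ C.iSup_range_commutatorEnd_le)
    (Submodule.mem_top (x := Additive.ofMul (⟨c, hc⟩ : C)))
end

section
/- If G is a finite group with trivial center and the derived subgroup G' can be generated by d elements, then |G| ≤ |G'|^(d+1). -/
/-!
Let `C = C_G(G')`. Since `G'` is the closure of a `d`-element set `S`, `C = C_G(S)`, and
`g ↦ ([g, s])_{s ∈ S}` embeds `G / C` into `(G')^d`; so `|G : C| ≤ |G'|^d` and it remains to see
`C ≤ G'`. By the three subgroups lemma `[C, C] ≤ Z(G) = 1`, so `C` is abelian; as `G'` centralizes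
`C`, the abelian group `G / G'` acts on `C` by conjugation, and its only fixed point is `1`
because fixed points are central.

For a finite abelian group `A` acting on a finite abelian group `M` with no nontrivial fixed
points, `M = [M, A]`. It suffices to treat `x` of `p`-power order. Let `H` be the `p'`-part of `A`.
The norm `∏_{h ∈ H} h • x` is fixed by `H` and has `p`-power order; the `p`-group `A / H` acts on
`C_M(H)` with only the trivial fixed point, so `p ∤ |C_M(H)|` and the norm is `1`. Hence
`x^|H| ∈ [M, A]`, and `x ∈ [M, A]` as `|H|` is prime to the order of `x`.
Applied to `G / G'` acting on `C`, this gives `C = [C, G] ≤ G'`.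
-/

open Subgroup

theorem Subgroup.eq_top_of_forall_pow_prime_pow_eq_one_mem {G : Type*} [Group G] [Finite G]
    (B : Subgroup G) (h : ∀ p n : ℕ, p.Prime → ∀ x : G, x ^ p ^ n = 1 → x ∈ B) : B = ⊤ := by
  rw [← index_eq_one]
  by_contra hB
  obtain ⟨p, hp, hpB⟩ := Nat.exists_prime_and_dvd hB
  have := Fact.mk hp
  let P : Sylow p G := default
  have hPB : (P : Subgroup G) ≤ B := fun x hx => by
    obtain ⟨n, hn⟩ := P.isPGroup' ⟨x, hx⟩
    exact h p n hp x (congrArg Subtype.val hn)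
  exact P.not_dvd_index (hpB.trans (index_dvd_of_le hPB))

theorem IsPGroup.not_dvd_card_of_fixedPoints_eq_bot {p : ℕ} [Fact p.Prime] {Q V : Type*}
    [Group Q] [Group V] [Finite V] [MulDistribMulAction Q V] (hQ : IsPGroup p Q)
    (hfix : FixedPoints.subgroup Q V = ⊥) : ¬ p ∣ Nat.card V := by
  have hone : Nat.card (MulAction.fixedPoints Q V) = 1 :=
    Nat.card_eq_one_iff_exists.mpr ⟨⟨1, smul_one⟩, fun v => Subtype.ext (mem_bot.mp (hfix.le v.2))⟩
  have hmod := hQ.card_modEq_card_fixedPoints V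
  rw [hone] at hmod
  exact fun hdvd => (Fact.out : p.Prime).not_dvd_one
    (Nat.modEq_zero_iff_dvd.mp (hmod.symm.trans (Nat.modEq_zero_iff_dvd.mpr hdvd)))

theorem CommGroup.exists_not_dvd_card_isPGroup_quotient (A : Type*) [CommGroup A] [Finite A]
    {p : ℕ} (hp : p.Prime) : ∃ H : Subgroup A, ¬ p ∣ Nat.card H ∧ IsPGroup p (A ⧸ H) := by
  have := Fact.mk hp
  refine ⟨(powMonoidHom (ordCompl[p] (Nat.card A))).ker, fun hdvd => ?_, fun a => ?_⟩
  · obtain ⟨h, hh⟩ := exists_prime_orderOf_dvd_card' p hdvd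
    have hpow : h ^ ordCompl[p] (Nat.card A) = 1 := Subtype.ext h.2
    exact Nat.not_dvd_ordCompl hp Nat.card_pos.ne' (hh ▸ orderOf_dvd_of_pow_eq_one hpow)
  · induction a using QuotientGroup.induction_on with | H a => ?_
    refine ⟨(Nat.card A).factorization p, ?_⟩
    rw [← QuotientGroup.mk_pow, QuotientGroup.eq_one_iff, MonoidHom.mem_ker, powMonoidHom_apply,
      ← pow_mul, Nat.ordProj_mul_ordCompl_eq_self, pow_card_eq_one']

def smulCommutator (A M : Type*) [Monoid A] [Group M] [MulAction A M] : Subgroup M :=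
  closure {x | ∃ (a : A) (m : M), a • m * m⁻¹ = x}

section CoprimeAction

variable {A M : Type*} [CommGroup A] [CommGroup M] [MulDistribMulAction A M]

theorem prod_smul_mul_inv_pow_card_mem_smulCommutator (H : Subgroup A) [Fintype H] (x : M) :
    (∏ h : H, h • x) * (x ^ Nat.card H)⁻¹ ∈ smulCommutator A M := by
  rw [← inv_pow, Nat.card_eq_fintype_card, ← Finset.card_univ, ← Finset.prod_const,
    ← Finset.prod_mul_distrib]
  exact prod_mem fun h _ => subset_closure ⟨h, x, rfl⟩

theorem mem_smulCommutator_of_pow_prime_pow_eq_one [Finite A] [Finite M]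
    (hfix : FixedPoints.subgroup A M = ⊥) {p n : ℕ} (hp : p.Prime) {x : M} (hx : x ^ p ^ n = 1) :
    x ∈ smulCommutator A M := by
  have := Fact.mk hp
  obtain ⟨H, hpH, hAH⟩ := CommGroup.exists_not_dvd_card_isPGroup_quotient A hp
  have := Fintype.ofFinite H
  set V := FixedPoints.subgroup H M
  set π := ∏ h : H, h • x
  have hπV : π ∈ V := fun h => Finset.smul_prod_perm x h
  have hpV : ¬ p ∣ Nat.card V := hAH.not_dvd_card_of_fixedPoints_eq_bot <| eq_bot_iff.mpr
    fun v hv => Subtype.ext (mem_bot.mp (hfix.le fun a => congrArg Subtype.val (hv a)))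
  have hπ : π = 1 := by
    have hπp : π ^ p ^ n = 1 := by
      simp only [π, ← Finset.prod_pow, ← smul_pow', hx, smul_one, Finset.prod_const_one]
    have hcop : (Nat.card V).Coprime (p ^ n) :=
      (Nat.Coprime.pow_left n ((Nat.Prime.coprime_iff_not_dvd hp).mpr hpV)).symm
    exact congrArg Subtype.val <| (Nat.Coprime.pow_left_bijective hcop).injective
      (a₁ := ⟨π, hπV⟩) (a₂ := 1) (Subtype.ext (by simpa using hπp))
  have hxH : x ^ Nat.card H ∈ smulCommutator A M := by
    simpa [π, hπ] using prod_smul_mul_inv_pow_card_mem_smulCommutator H x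
  have hcop : (Nat.card H).Coprime (orderOf x) :=
    (Nat.Coprime.pow_left n ((Nat.Prime.coprime_iff_not_dvd hp).mpr hpH)).symm.coprime_dvd_right
      (orderOf_dvd_of_pow_eq_one hx)
  obtain ⟨m, hm⟩ := exists_pow_eq_self_of_coprime hcop
  exact hm ▸ pow_mem hxH m

theorem smulCommutator_eq_top [Finite A] [Finite M] (hfix : FixedPoints.subgroup A M = ⊥) :
    smulCommutator A M = ⊤ :=
  (smulCommutator A M).eq_top_of_forall_pow_prime_pow_eq_one_mem fun _ _ hp _ hx =>
    mem_smulCommutator_of_pow_prime_pow_eq_one hfix hp hx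

end CoprimeAction

section Centralizer

variable {G : Type*} [Group G]

theorem index_centralizer_le_pow [Finite G] (S : Finset G) :
    (centralizer (S : Set G)).index ≤ Nat.card (commutator G) ^ S.card := by
  have hS : centralizer (S : Set G) = ⨅ s : (S : Set G), centralizer {(s : G)} := by
    rw [centralizer_eq_iInf, ← iInf_subtype'']
  let f : G ⧸ centralizer (S : Set G) ↪ (↥(S : Set G) → commutatorSet G) :=
    (quotientEquivOfEq hS).toEmbedding.trans ((quotientiInfEmbedding _).trans
      (Function.Embedding.piCongrRight fun s => quotientCentralizerEmbedding (s : G)))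
  calc (centralizer (S : Set G)).index ≤ Nat.card (commutatorSet G) ^ S.card := by
        have := Nat.card_le_card_of_injective f f.injective
        rwa [Nat.card_fun, Finset.coe_sort_coe, Nat.card_eq_finsetCard] at this
    _ ≤ Nat.card (commutator G) ^ S.card := by
        gcongr
        exact Nat.card_mono (Set.toFinite _) (commutator_eq_closure G ▸ subset_closure)

open scoped IsMulCommutative in
theorem centralizer_commutator_le_commutator [Finite G] (hZ : center G = ⊥) :
    centralizer (commutator G : Set G) ≤ commutator G := by
  set C := centralizer (commutator G : Set G)
  have : IsMulCommutative C := commutator_self_eq_bot_iff.mp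
    (eq_bot_iff.mpr (hZ ▸ commutator_centralizer_commutator_le_center G))
  let φ : Abelianization G →* MulAut C := QuotientGroup.lift _ MulAut.conjNormal fun k hk =>
    MulEquiv.ext fun c => Subtype.ext <| by
      rw [MulAut.conjNormal_apply, mem_centralizer_iff.mp c.2 k hk, mul_inv_cancel_right]
      rfl
  let := MulDistribMulAction.compHom C φ
  have hsmul : ∀ (g : G) (c : C), ((Abelianization.of g • c : C) : G) = g * c * g⁻¹ := fun g c =>
    MulAut.conjNormal_apply g c
  have hfix : FixedPoints.subgroup (Abelianization G) C = ⊥ := eq_bot_iff.mpr fun c hc =>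
    Subtype.ext <| mem_bot.mp <| hZ ▸ mem_center_iff.mpr fun g => by
      rw [← mul_inv_eq_iff_eq_mul, ← hsmul, hc]
  have hle : smulCommutator (Abelianization G) C ≤ (commutator G).subgroupOf C := by
    refine (closure_le _).mpr ?_
    rintro _ ⟨a, y, rfl⟩
    obtain ⟨g, rfl⟩ : ∃ g, Abelianization.of g = a := QuotientGroup.mk_surjective a
    rw [SetLike.mem_coe, mem_subgroupOf, coe_mul, coe_inv, hsmul]
    exact commutator_mem_commutator (mem_top g) (mem_top (y : G))
  exact fun c hc => mem_subgroupOf.mp (hle ((smulCommutator_eq_top hfix).ge (mem_top ⟨c, hc⟩)))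

end Centralizer

theorem stmt_5 (G : Type*) [Group G] [Finite G] (d : ℕ)
    (hZ : Subgroup.center G = ⊥)
    (hgen : ∃ S : Finset G, S.card ≤ d ∧ Subgroup.closure (S : Set G) = commutator G) :
    Nat.card G ≤ Nat.card (commutator G) ^ (d + 1) := by
  obtain ⟨S, hSd, hS⟩ := hgen
  have hC : centralizer (commutator G : Set G) = centralizer (S : Set G) := by
    rw [← hS, centralizer_closure]
  calc Nat.card G
      = (centralizer (S : Set G)).index * Nat.card (centralizer (commutator G : Set G)) := by
        rw [← hC, index_mul_card]
    _ ≤ Nat.card (commutator G) ^ d * Nat.card (commutator G) := by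
        gcongr
        · exact (index_centralizer_le_pow S).trans (Nat.pow_le_pow_right Nat.card_pos hSd)
        · exact card_le_of_le (centralizer_commutator_le_commutator hZ)
    _ = Nat.card (commutator G) ^ (d + 1) := (pow_succ _ _).symm
end

section
/- If P is a finite p-group generated by elements a_1, ..., a_d together with its center Z(P), then every element of the derived subgroup P' can be written as a product [x_1,a_1][x_2,a_2]···[x_d,a_d] for some x_1,...,x_d ∈ P. -/
/-!
Finite `p`-groups are nilpotent; we induct on the nilpotency class. Modulo the last nontrivial
term `N = [γₙ, P]` of the lower central series, `g ∈ P'` is a word `∏ [xᵢ, aᵢ]` times some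
`z ∈ N`. As `N` is central, `y ↦ ∏ [yᵢ, aᵢ]` is a homomorphism on `γₙᵈ` and, for `h ∈ γₙ`,
`[h, ·]` is a homomorphism on `P`. The preimage under the latter of the image of the former
is a subgroup containing the `aᵢ` and `Z(P)`, so it is all of `P`; hence `z = ∏ [yᵢ, aᵢ]` with
`yᵢ ∈ γₙ`, and `g = ∏ [xᵢ yᵢ, aᵢ]` because each `[yᵢ, aᵢ]` is central.
-/

open scoped commutatorElement

open Subgroup

section

variable {G : Type*} [Group G]

theorem commutatorElement_mul_left_of_mem_center (x y a : G) (h : ⁅y, a⁆ ∈ center G) :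
    ⁅x * y, a⁆ = ⁅x, a⁆ * ⁅y, a⁆ := by
  calc ⁅x * y, a⁆ = x * ⁅y, a⁆ * x⁻¹ * ⁅x, a⁆ := by simp only [commutatorElement_def]; group
    _ = ⁅y, a⁆ * ⁅x, a⁆ := by rw [mem_center_iff.mp h x]; group
    _ = ⁅x, a⁆ * ⁅y, a⁆ := (mem_center_iff.mp h _).symm

theorem commutatorElement_mul_right_of_mem_center (h g g' : G) (hc : ⁅h, g'⁆ ∈ center G) :
    ⁅h, g * g'⁆ = ⁅h, g⁆ * ⁅h, g'⁆ := by
  calc ⁅h, g * g'⁆ = ⁅h, g⁆ * (g * ⁅h, g'⁆ * g⁻¹) := by simp only [commutatorElement_def]; group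
    _ = ⁅h, g⁆ * ⁅h, g'⁆ := by rw [mem_center_iff.mp hc g]; group

theorem prod_ofFn_mul_of_mem_center : ∀ {d : ℕ} (f g : Fin d → G), (∀ i, g i ∈ center G) →
    (List.ofFn fun i => f i * g i).prod = (List.ofFn f).prod * (List.ofFn g).prod
  | 0, _, _, _ => by simp
  | d + 1, f, g, hg => by
    simp only [List.ofFn_succ, List.prod_cons,
      prod_ofFn_mul_of_mem_center (fun i => f i.succ) (fun i => g i.succ) (fun i => hg i.succ)]
    rw [mul_assoc, mul_assoc, ← mul_assoc (g 0), ← mem_center_iff.mp (hg 0), mul_assoc]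

def commutatorWord {d : ℕ} (x a : Fin d → G) : G :=
  (List.ofFn fun i => ⁅x i, a i⁆).prod

theorem map_commutatorWord {K : Type*} [Group K] (f : G →* K) {d : ℕ} (x a : Fin d → G) :
    f (commutatorWord x a) = commutatorWord (f ∘ x) (f ∘ a) := by
  simp only [commutatorWord, map_list_prod, List.map_ofFn, Function.comp_def, map_commutatorElement]

theorem commutatorWord_mul_of_mem_center {d : ℕ} (x y a : Fin d → G)
    (h : ∀ i, ⁅y i, a i⁆ ∈ center G) :
    commutatorWord (x * y) a = commutatorWord x a * commutatorWord y a := by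
  simp only [commutatorWord, Pi.mul_apply,
    fun i => commutatorElement_mul_left_of_mem_center (x i) (y i) (a i) (h i)]
  exact prod_ofFn_mul_of_mem_center _ _ h

theorem commutatorWord_one {d : ℕ} (a : Fin d → G) : commutatorWord 1 a = 1 := by
  simp [commutatorWord]

theorem commutatorWord_mulSingle : ∀ {d : ℕ} (j : Fin d) (h : G) (a : Fin d → G),
    commutatorWord (Pi.mulSingle j h) a = ⁅h, a j⁆
  | d + 1, j, h, a => by
    cases j using Fin.cases with
    | zero => simp [commutatorWord, List.ofFn_succ, Pi.mulSingle_apply, Fin.succ_ne_zero]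
    | succ j =>
      have := commutatorWord_mulSingle j h (fun i => a i.succ)
      simp_all [commutatorWord, List.ofFn_succ, Pi.mulSingle_apply, (Fin.succ_ne_zero _).symm]

theorem map_center_le_center_of_surjective {K : Type*} [Group K] {f : G →* K}
    (hf : Function.Surjective f) : (center G).map f ≤ center K := by
  rintro _ ⟨z, hz, rfl⟩
  refine mem_center_iff.mpr fun q => ?_
  obtain ⟨g, rfl⟩ := hf q
  rw [← map_mul, ← map_mul, mem_center_iff.mp hz g]

theorem closure_range_union_center_eq_top_of_surjective {K : Type*} [Group K] {f : G →* K}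
    (hf : Function.Surjective f) {d : ℕ} {a : Fin d → G}
    (hgen : closure (Set.range a ∪ center G) = ⊤) :
    closure (Set.range (f ∘ a) ∪ center K) = ⊤ := by
  rw [eq_top_iff, ← map_top_of_surjective f hf, ← hgen, MonoidHom.map_closure, Set.image_union,
    ← Set.range_comp]
  exact closure_mono (Set.union_subset_union_right _ (map_center_le_center_of_surjective hf))

def commutatorWordHom {H : Subgroup G} (hH : ⁅H, (⊤ : Subgroup G)⁆ ≤ center G) {d : ℕ}
    (a : Fin d → G) : (Fin d → H) →* G :=
  MonoidHom.mk' (fun y => commutatorWord (fun i => (y i : G)) a) fun _ y' =>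
    commutatorWord_mul_of_mem_center _ _ a fun i => hH (commutator_mem_commutator (y' i).2 trivial)

theorem exists_commutatorWord_eq_of_mem_commutator {H : Subgroup G}
    (hH : ⁅H, (⊤ : Subgroup G)⁆ ≤ center G) {d : ℕ} {a : Fin d → G}
    (hgen : closure (Set.range a ∪ center G) = ⊤) :
    ∀ z ∈ ⁅H, (⊤ : Subgroup G)⁆, ∃ y : Fin d → G, (∀ i, y i ∈ H) ∧ commutatorWord y a = z := by
  suffices ⁅H, (⊤ : Subgroup G)⁆ ≤ (commutatorWordHom hH a).range by
    intro z hz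
    obtain ⟨y, hy⟩ := this hz
    exact ⟨fun i => y i, fun i => (y i).2, hy⟩
  refine commutator_le.mpr fun h hh g _ => ?_
  let bracket : G →* G := MonoidHom.mk' (⁅h, ·⁆) fun g g' =>
    commutatorElement_mul_right_of_mem_center h g g' (hH (commutator_mem_commutator hh trivial))
  suffices closure (Set.range a ∪ center G) ≤ (commutatorWordHom hH a).range.comap bracket by
    exact this (hgen ▸ mem_top g)
  rw [closure_le]
  rintro _ (⟨j, rfl⟩ | hz)
  · refine ⟨Pi.mulSingle j ⟨h, hh⟩, ?_⟩
    have hcoe : (fun i => ((Pi.mulSingle j ⟨h, hh⟩ : Fin d → H) i : G)) = Pi.mulSingle j h := by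
      ext i; by_cases hi : i = j <;> simp [hi]
    simp only [commutatorWordHom, MonoidHom.mk'_apply, hcoe, commutatorWord_mulSingle]
    rfl
  · refine ⟨1, ?_⟩
    rw [map_one, eq_comm]
    exact commutatorElement_eq_one_iff_commute.mpr (mem_center_iff.mp hz h)

end

theorem exists_eq_commutatorWord_of_lowerCentralSeries_eq_bot {G : Type*} [Group G] {n : ℕ}
    (hbot : (⊤ : Subgroup G).lowerCentralSeries (n + 1) = ⊥) {d : ℕ} {a : Fin d → G}
    (hgen : closure (Set.range a ∪ center G) = ⊤) :
    ∀ g ∈ commutator G, ∃ x : Fin d → G, g = commutatorWord x a := by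
  induction n generalizing G with
  | zero =>
    intro g hg
    rw [← top_lowerCentralSeries_one, hbot, mem_bot] at hg
    exact ⟨1, by rw [hg, commutatorWord_one]⟩
  | succ n ih =>
    intro g hg
    set N := (⊤ : Subgroup G).lowerCentralSeries (n + 1)
    have hN : N ≤ center G := commutator_top_right_eq_bot_iff_le_center.mp hbot
    let π := QuotientGroup.mk' N
    have hπ : Function.Surjective π := QuotientGroup.mk'_surjective N
    have hbotQ : (⊤ : Subgroup (G ⧸ N)).lowerCentralSeries (n + 1) = ⊥ := by
      rw [← map_top_of_surjective π hπ, ← map_lowerCentralSeries, Subgroup.map_eq_bot_iff,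
        QuotientGroup.ker_mk']
    obtain ⟨xQ, hxQ⟩ := ih hbotQ (closure_range_union_center_eq_top_of_surjective hπ hgen) (π g)
      (by rw [_root_.commutator_def, ← MonoidHom.range_eq_top_of_surjective π hπ,
        ← map_commutator_eq]; exact mem_map_of_mem π hg)
    choose x hx using fun i => hπ (xQ i)
    have hz : (commutatorWord x a)⁻¹ * g ∈ N := by
      rw [← QuotientGroup.ker_mk' N, MonoidHom.mem_ker, map_mul, map_inv, map_commutatorWord,
        show π ∘ x = xQ from funext hx, hxQ, inv_mul_cancel]
    obtain ⟨y, hyN, hy⟩ := exists_commutatorWord_eq_of_mem_commutator hN hgen _ hz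
    refine ⟨x * y, ?_⟩
    rw [commutatorWord_mul_of_mem_center, hy, mul_inv_cancel_left]
    exact fun i => hN (commutator_mem_commutator (hyN i) trivial)

theorem exists_eq_commutatorWord_of_isNilpotent {G : Type*} [Group G] [Group.IsNilpotent G]
    {d : ℕ} {a : Fin d → G} (hgen : closure (Set.range a ∪ center G) = ⊤) :
    ∀ g ∈ commutator G, ∃ x : Fin d → G, g = commutatorWord x a :=
  exists_eq_commutatorWord_of_lowerCentralSeries_eq_bot
    (Subgroup.lowerCentralSeries_eq_bot_iff_nilpotencyClass_le.mpr (Nat.le_succ _)) hgen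

theorem stmt_7 (p : ℕ) [Fact p.Prime] (P : Type*) [Group P] [Finite P]
    (hp : IsPGroup p P) (d : ℕ) (a : Fin d → P)
    (hgen : Subgroup.closure (Set.range a ∪ (Subgroup.center P : Set P)) = ⊤) :
    ∀ g ∈ commutator P, ∃ x : Fin d → P,
      g = (List.ofFn fun i => ⁅x i, a i⁆).prod :=
  have := hp.isNilpotent
  exists_eq_commutatorWord_of_isNilpotent hgen
end

section
/- Let G be a finite group, H ≤ G a subgroup generated by d elements, and K a normal subgroup of G. Then |K : C_K(H)| ≤ |G' ∩ K|^d. -/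
/-!
For `k ∈ K` and `s ∈ S`, where `S` generates `H`, the commutator `⁅k, s⁆` lies in `G' ∩ K`, and
`⁅a, s⁆ = ⁅b, s⁆` exactly when `a⁻¹ * b` commutes with `s`. Hence `k ↦ (⁅k, s⁆)_{s ∈ S}` separates
the left cosets of `C_K(S) = C_K(H)`, giving `|K : C_K(H)| ≤ |G' ∩ K| ^ |S|`.
-/

open scoped commutatorElement

theorem Subgroup.index_le_card_of_eq_imp_inv_mul_mem {G X : Type*} [Group G] [Finite X]
    {N : Subgroup G} (f : G → X) (hf : ∀ a b, f a = f b → a⁻¹ * b ∈ N) :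
    N.index ≤ Nat.card X := by
  refine Nat.card_le_card_of_injective (f ∘ Quotient.out) fun p q hpq => ?_
  rw [← Quotient.out_eq p, ← Quotient.out_eq q]
  exact Quotient.sound (QuotientGroup.leftRel_apply.mpr (hf _ _ hpq))

theorem commutatorElement_eq_commutatorElement_iff {G : Type*} [Group G] {a b g : G} :
    ⁅a, g⁆ = ⁅b, g⁆ ↔ Commute (a⁻¹ * b) g := by
  simp only [commutatorElement_def, mul_left_inj, Commute, SemiconjBy]
  constructor <;> intro h
  · calc a⁻¹ * b * g = a⁻¹ * (b * g * b⁻¹) * b := by group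
      _ = a⁻¹ * (a * g * a⁻¹) * b := by rw [h]
      _ = g * (a⁻¹ * b) := by group
  · calc a * g * a⁻¹ = a * (g * (a⁻¹ * b)) * b⁻¹ := by group
      _ = a * (a⁻¹ * b * g) * b⁻¹ := by rw [h]
      _ = b * g * b⁻¹ := by group

theorem commutatorElement_mem_commutator_inf {G : Type*} [Group G] {K : Subgroup G}
    [K.Normal] {k : G} (hk : k ∈ K) (g : G) : ⁅k, g⁆ ∈ commutator G ⊓ K :=
  ⟨Subgroup.commutator_mem_commutator (Subgroup.mem_top k) (Subgroup.mem_top g),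
    Subgroup.commutator_le_left K ⊤ (Subgroup.commutator_mem_commutator hk (Subgroup.mem_top g))⟩

theorem stmt_10 (G : Type*) [Group G] [Finite G] (H K : Subgroup G) [K.Normal] (d : ℕ)
    (hgen : ∃ S : Finset G, S.card ≤ d ∧ Subgroup.closure (S : Set G) = H) :
    ((Subgroup.centralizer (H : Set G)).subgroupOf K).index ≤
      Nat.card ↥(commutator G ⊓ K) ^ d := by
  obtain ⟨S, hSd, rfl⟩ := hgen
  rw [Subgroup.centralizer_closure]
  let commutators (k : K) (s : S) : ↥(commutator G ⊓ K) :=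
    ⟨⁅(k : G), s⁆, commutatorElement_mem_commutator_inf k.2 s⟩
  calc ((Subgroup.centralizer (S : Set G)).subgroupOf K).index
      ≤ Nat.card (S → ↥(commutator G ⊓ K)) := by
        refine Subgroup.index_le_card_of_eq_imp_inv_mul_mem commutators fun a b hab => ?_
        rw [Subgroup.mem_subgroupOf, Subgroup.mem_centralizer_iff]
        intro s hs
        have hcomm := commutatorElement_eq_commutatorElement_iff.mp
          (congrArg Subtype.val (congrFun hab ⟨s, hs⟩))
        simpa using hcomm.symm.eq
    _ = Nat.card ↥(commutator G ⊓ K) ^ S.card := by simp [Nat.card_fun]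
    _ ≤ Nat.card ↥(commutator G ⊓ K) ^ d := Nat.pow_le_pow_right Nat.card_pos hSd
end

section
/- Let A be a finite abelian p-group of rank r, and let S be a collection of subgroups of A with trivial intersection. Then there exists a subcollection R ⊆ S with |R| ≤ r whose intersection is trivial. -/
/-!
Let `Ω = {x | x ^ p = 1}` be the socle of `A`. It is generated by `r` elements of order
dividing `p`, so `|Ω| ≤ p ^ r`. Since `⋂ S = 1`, a subgroup `K ≠ 1` of `Ω` is not contained in
some `H ∈ S`, and then `K ∩ H` has index at least `p` in `K`; starting from `K = Ω` and
repeating at most `r` times reaches `Ω ∩ H₁ ∩ ⋯ ∩ Hₖ = 1`. Finally a subgroup meeting `Ω`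
trivially is trivial, as every nontrivial subgroup of a `p`-group contains an element of order `p`.
-/

/-- The rank of a group: the minimal number `r` such that every subgroup
can be generated by `r` elements. -/
noncomputable def grpRank (G : Type*) [Group G] : ℕ :=
  sInf {r : ℕ | ∀ H : Subgroup G, ∃ S : Finset G, S.card ≤ r ∧ Subgroup.closure (S : Set G) = H}

open Pointwise

theorem Subgroup.card_closure_le_prod_orderOf {G : Type*} [CommGroup G] (T : Finset G) :
    Nat.card (closure (T : Set G)) ≤ ∏ x ∈ T, orderOf x := by
  classical
  induction T using Finset.induction with
  | empty => simp
  | insert x T hx ih =>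
    have hsup : closure ((insert x T : Finset G) : Set G) = zpowers x ⊔ closure (T : Set G) := by
      rw [Finset.coe_insert, Set.insert_eq, closure_union, ← zpowers_eq_closure]
    calc Nat.card (closure ((insert x T : Finset G) : Set G))
        = Nat.card ((zpowers x : Set G) * (closure (T : Set G) : Set G)) := by
          rw [hsup, ← normal_mul]; rfl
      _ ≤ Nat.card (zpowers x) * Nat.card (closure (T : Set G)) := Set.natCard_mul_le
      _ ≤ orderOf x * ∏ y ∈ T, orderOf y := by rw [Nat.card_zpowers]; gcongr
      _ = ∏ y ∈ insert x T, orderOf y := (Finset.prod_insert hx).symm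

theorem exists_finset_card_le_grpRank_closure_eq {G : Type*} [Group G] [Finite G]
    (H : Subgroup G) : ∃ T : Finset G, T.card ≤ grpRank G ∧ Subgroup.closure (T : Set G) = H := by
  have : Fintype G := Fintype.ofFinite G
  have hne : {r : ℕ | ∀ H : Subgroup G, ∃ T : Finset G,
      T.card ≤ r ∧ Subgroup.closure (T : Set G) = H}.Nonempty := by
    classical
    exact ⟨Fintype.card G, fun H => ⟨(H : Set G).toFinset, Finset.card_le_univ _, by simp⟩⟩
  exact Nat.sInf_mem hne H

theorem card_ker_powMonoidHom_le_pow_grpRank {G : Type*} [CommGroup G] [Finite G] {n : ℕ}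
    (hn : n ≠ 0) : Nat.card (powMonoidHom n : G →* G).ker ≤ n ^ grpRank G := by
  classical
  obtain ⟨T, hTcard, hT⟩ := exists_finset_card_le_grpRank_closure_eq (powMonoidHom n : G →* G).ker
  have horder : ∀ x ∈ T, orderOf x ≤ n := fun x hx =>
    Nat.le_of_dvd (Nat.pos_of_ne_zero hn) <| orderOf_dvd_of_pow_eq_one <|
      (hT ▸ Subgroup.subset_closure hx : x ∈ (powMonoidHom n : G →* G).ker)
  calc Nat.card (powMonoidHom n : G →* G).ker
      ≤ ∏ x ∈ T, orderOf x := hT ▸ Subgroup.card_closure_le_prod_orderOf T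
    _ ≤ n ^ T.card := Finset.prod_le_pow_card T _ n horder
    _ ≤ n ^ grpRank G := Nat.pow_le_pow_right (Nat.pos_of_ne_zero hn) hTcard

namespace IsPGroup

variable {p : ℕ} [Fact p.Prime] {G : Type*} [Group G]

theorem prime_mul_card_le_card_of_lt [Finite G] (hp : IsPGroup p G) {H K : Subgroup G}
    (hHK : H < K) : p * Nat.card H ≤ Nat.card K := by
  obtain ⟨a, ha⟩ := iff_card.mp (hp.to_subgroup H)
  obtain ⟨b, hb⟩ := iff_card.mp (hp.to_subgroup K)
  have hab : a < b := by
    have hle : a ≤ b := (Nat.pow_dvd_pow_iff_le_right (Fact.out : p.Prime).one_lt).mp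
      (ha ▸ hb ▸ Subgroup.card_dvd_of_le hHK.le)
    refine hle.lt_of_ne fun hab => hHK.ne (Subgroup.eq_of_le_of_card_ge hHK.le ?_)
    rw [ha, hb, hab]
  calc p * Nat.card H = p ^ (a + 1) := by rw [ha, pow_succ']
    _ ≤ p ^ b := Nat.pow_le_pow_right (Fact.out : p.Prime).pos hab
    _ = Nat.card K := hb.symm

theorem exists_finset_inf_eq_bot [Finite G] (hp : IsPGroup p G) {S : Set (Subgroup G)}
    (hS : sInf S = ⊥) (n : ℕ) (K : Subgroup G) (hK : Nat.card K ≤ p ^ n) :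
    ∃ R : Finset (Subgroup G), ↑R ⊆ S ∧ R.card ≤ n ∧ K ⊓ R.inf id = ⊥ := by
  classical
  induction n generalizing K with
  | zero =>
    refine ⟨∅, by simp, le_rfl, ?_⟩
    simpa using K.card_le_one_iff_eq_bot.mp (by simpa using hK)
  | succ n ih =>
    by_cases hK_bot : K = ⊥
    · exact ⟨∅, by simp, Nat.zero_le _, by simp [hK_bot]⟩
    obtain ⟨H, hHS, hKH⟩ : ∃ H ∈ S, ¬ K ≤ H := by
      by_contra! h
      exact hK_bot (le_bot_iff.mp (hS ▸ le_sInf h))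
    have hcard : Nat.card (K ⊓ H : Subgroup G) ≤ p ^ n := by
      refine Nat.le_of_mul_le_mul_left ?_ (Fact.out : p.Prime).pos
      calc p * Nat.card (K ⊓ H : Subgroup G) ≤ Nat.card K :=
            hp.prime_mul_card_le_card_of_lt (inf_lt_left.mpr hKH)
        _ ≤ p * p ^ n := by rwa [← pow_succ']
    obtain ⟨R, hRS, hRcard, hR⟩ := ih (K ⊓ H) hcard
    refine ⟨insert H R, ?_, (Finset.card_insert_le H R).trans (Nat.succ_le_succ hRcard), ?_⟩
    · rw [Finset.coe_insert]
      exact Set.insert_subset hHS hRS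
    · rwa [Finset.inf_insert, id, ← inf_assoc]

end IsPGroup

theorem IsPGroup.eq_bot_of_inf_ker_powMonoidHom_eq_bot {p : ℕ} [Fact p.Prime] {G : Type*}
    [CommGroup G] (hp : IsPGroup p G) {K : Subgroup G}
    (hK : K ⊓ (powMonoidHom p : G →* G).ker = ⊥) : K = ⊥ := by
  refine (Subgroup.eq_bot_iff_forall K).mpr fun x hxK => ?_
  by_contra hx
  have horder : orderOf x ≠ 0 :=
    (hp.isOfFinOrder (Fact.out : p.Prime).ne_zero x).orderOf_pos.ne'
  have hy : orderOf (x ^ (orderOf x / p)) = p :=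
    orderOf_pow_orderOf_div horder (hp.dvd_orderOf hx)
  have hy_mem : x ^ (orderOf x / p) ∈ K ⊓ (powMonoidHom p : G →* G).ker :=
    Subgroup.mem_inf.mpr ⟨K.pow_mem hxK _, by
      simpa [hy] using pow_orderOf_eq_one (x ^ (orderOf x / p))⟩
  rw [hK, Subgroup.mem_bot, ← orderOf_eq_one_iff, hy] at hy_mem
  exact (Fact.out : p.Prime).one_lt.ne' hy_mem

theorem stmt_13 (p : ℕ) [Fact p.Prime] (A : Type*) [CommGroup A] [Finite A]
    (hp : IsPGroup p A) (r : ℕ) (hr : grpRank A = r)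
    (S : Set (Subgroup A)) (hS : sInf S = ⊥) :
    ∃ R : Finset (Subgroup A), ↑R ⊆ S ∧ R.card ≤ r ∧ R.inf id = ⊥ := by
  obtain ⟨R, hRS, hRcard, hR⟩ := hp.exists_finset_inf_eq_bot hS r _
    (hr ▸ card_ker_powMonoidHom_le_pow_grpRank (Fact.out : p.Prime).ne_zero)
  exact ⟨R, hRS, hRcard, hp.eq_bot_of_inf_ker_powMonoidHom_eq_bot (by rwa [inf_comm])⟩
end

section
/- Let G be a finite p-group with Z = G' ∩ Z(G) and rk(G'/Z) = r. Then rk(C_G(G')/Z_2(G)) ≤ r². -/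
open Subgroup
open scoped commutatorElement

theorem IsPGroup.exists_pow_prime_pow_notMem {p : ℕ} {G : Type*} [Group G] (hp : IsPGroup p G)
    {H : Subgroup G} {x : G} (hx : x ∉ H) : ∃ m : ℕ, x ^ p ^ m ∉ H ∧ (x ^ p ^ m) ^ p ∈ H := by
  classical
  have hex : ∃ n : ℕ, x ^ p ^ n ∈ H := (hp x).imp fun _ hn => by rw [hn]; exact H.one_mem
  have hn0 : Nat.find hex ≠ 0 := fun h => hx (by simpa [h] using Nat.find_spec hex)
  refine ⟨Nat.find hex - 1, Nat.find_min hex (by omega), ?_⟩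
  rw [← pow_mul, ← pow_succ, Nat.sub_add_cancel (Nat.one_le_iff_ne_zero.mpr hn0)]
  exact Nat.find_spec hex

theorem IsPGroup.card_mul_le_of_lt {p : ℕ} [Fact p.Prime] {G : Type*} [Group G] [Finite G]
    (hp : IsPGroup p G) {H K : Subgroup G} (hHK : H < K) : Nat.card H * p ≤ Nat.card K := by
  obtain ⟨a, ha⟩ := IsPGroup.iff_card.mp (hp.to_subgroup H)
  obtain ⟨b, hb⟩ := IsPGroup.iff_card.mp (hp.to_subgroup K)
  have hlt : p ^ a < p ^ b := ha ▸ hb ▸ (card_le_of_le hHK.le).lt_of_ne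
    fun h => hHK.ne (eq_of_le_of_card_ge hHK.le h.ge)
  rw [ha, hb, ← pow_succ]
  exact Nat.pow_le_pow_right (Fact.out : p.Prime).pos
    ((Nat.pow_lt_pow_iff_right (Fact.out : p.Prime).one_lt).mp hlt)

theorem Subgroup.card_le_pow_rank {G : Type*} [Group G] [Finite G] (H : Subgroup G) {n : ℕ}
    (hn : 0 < n) (hcomm : ∀ a ∈ H, ∀ b ∈ H, a * b = b * a) (hpow : ∀ a ∈ H, a ^ n = 1) :
    Nat.card H ≤ n ^ Group.rank H := by
  let : CommGroup H :=
    { mul_comm := fun a b => Subtype.ext (hcomm a a.2 b b.2) }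
  exact Nat.le_of_dvd (pow_pos hn _)
    (card_dvd_exponent_pow_rank' H fun a => Subtype.ext (hpow a a.2))

namespace Group

variable {X Y A : Type*} [Group X] [Group Y] [Group A]

theorem exists_finset_card_le_closure_eq_iff_rank_le (H : Subgroup X) [Group.FG H] {n : ℕ} :
    (∃ S : Finset X, S.card ≤ n ∧ closure (S : Set X) = H) ↔ rank H ≤ n := by
  constructor
  · rintro ⟨S, hSn, rfl⟩
    exact (rank_closure_finset_le_card S).trans hSn
  · intro hn
    obtain ⟨T, hT, hTgen⟩ := rank_spec H
    refine ⟨T.map (Function.Embedding.subtype _), by simpa [hT] using hn, ?_⟩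
    rw [Finset.coe_map]
    change closure (H.subtype '' T) = H
    rw [← MonoidHom.map_closure, hTgen, ← MonoidHom.range_eq_map, range_subtype]

theorem rank_le_rank_ker_add_rank_range [Finite X] (f : X →* Y) :
    rank X ≤ rank f.ker + rank f.range := by
  classical
  obtain ⟨S, hS, hSgen⟩ := rank_spec f.ker
  obtain ⟨T, hT, hTgen⟩ := rank_spec f.range
  choose lift hlift using fun t : f.range => t.2
  let U : Finset X := S.map (Function.Embedding.subtype _) ∪ T.image lift
  have hSU : ∀ s ∈ S, (s : X) ∈ closure (U : Set X) := fun s hs =>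
    subset_closure (Finset.mem_union_left _ (Finset.mem_map_of_mem _ hs))
  have hTU : ∀ t ∈ T, lift t ∈ closure (U : Set X) := fun t ht =>
    subset_closure (Finset.mem_union_right _ (Finset.mem_image_of_mem _ ht))
  have hU : closure (U : Set X) = ⊤ := by
    refine eq_top_iff.mpr fun x _ => ?_
    have hrange : (⊤ : Subgroup f.range) ≤ ((closure (U : Set X)).map f).subgroupOf f.range := by
      rw [← hTgen, closure_le]
      exact fun t ht => mem_subgroupOf.mpr ⟨lift t, hTU t ht, hlift t⟩
    obtain ⟨c, hc, hcx⟩ := mem_subgroupOf.mp (hrange (mem_top ⟨f x, x, rfl⟩))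
    have hker : (⊤ : Subgroup f.ker) ≤ (closure (U : Set X)).subgroupOf f.ker := by
      rw [← hSgen, closure_le]
      exact fun s hs => mem_subgroupOf.mpr (hSU s hs)
    have hcx' : c⁻¹ * x ∈ f.ker := by simp [MonoidHom.mem_ker, hcx]
    simpa using mul_mem hc (mem_subgroupOf.mp (hker (mem_top ⟨_, hcx'⟩)))
  calc rank X ≤ U.card := rank_le hU
    _ ≤ S.card + T.card := (Finset.card_union_le _ _).trans
        (by rw [Finset.card_map]; exact Nat.add_le_add_left Finset.card_image_le _)
    _ = rank f.ker + rank f.range := by rw [hS, hT]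

theorem rank_le_of_injective [Finite X] [Finite Y] {n : ℕ} {f : X →* Y} (hf : Function.Injective f)
    (hY : ∀ H : Subgroup Y, rank H ≤ n) : rank X ≤ n :=
  (rank_congr (MonoidHom.ofInjective hf)).trans_le (hY _)

theorem rank_subgroup_fin_pi_le [Finite A] {n : ℕ} (hA : ∀ H : Subgroup A, rank H ≤ n) :
    ∀ (k : ℕ) (K : Subgroup (Fin k → A)), rank K ≤ k * n
  | 0, K => by simp [rank_eq_zero]
  | k + 1, K => by
    let f : K →* (Fin k → A) :=
      (MonoidHom.pi fun i : Fin k => Pi.evalMonoidHom _ i.succ).comp K.subtype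
    let g : f.ker →* A := (Pi.evalMonoidHom _ 0).comp (K.subtype.comp f.ker.subtype)
    have hg : Function.Injective g := by
      refine (injective_iff_map_eq_one g).mpr fun v hv => ?_
      have htail := congr_fun (f.mem_ker.mp v.2)
      ext i
      exact Fin.cases hv (fun i => htail i) i
    calc rank K ≤ rank f.ker + rank f.range := rank_le_rank_ker_add_rank_range f
      _ ≤ n + k * n := Nat.add_le_add (rank_le_of_injective hg hA)
          (rank_subgroup_fin_pi_le hA k _)
      _ = (k + 1) * n := by ring

theorem rank_subgroup_pi_le [Finite A] {ι : Type*} [Finite ι] {n : ℕ}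
    (hA : ∀ H : Subgroup A, rank H ≤ n) (K : Subgroup (ι → A)) : rank K ≤ Nat.card ι * n := by
  obtain ⟨k, ⟨e⟩⟩ := Finite.exists_equiv_fin ι
  rw [Nat.card_eq_of_equiv_fin e]
  let E : (ι → A) ≃* (Fin k → A) := MulEquiv.arrowCongr e (MulEquiv.refl A)
  exact rank_le_of_injective (f := E.toMonoidHom.comp K.subtype)
    (E.injective.comp Subtype.val_injective) (rank_subgroup_fin_pi_le hA k)

end Group

theorem grpRank_le_iff {G : Type*} [Group G] [Finite G] {n : ℕ} :
    grpRank G ≤ n ↔ ∀ H : Subgroup G, Group.rank H ≤ n := by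
  simp_rw [← Group.exists_finset_card_le_closure_eq_iff_rank_le]
  have hne : Nat.card G ∈ {r : ℕ | ∀ H : Subgroup G, ∃ S : Finset G,
      S.card ≤ r ∧ closure (S : Set G) = H} := fun H =>
    ⟨(Set.toFinite (H : Set G)).toFinset, by
      simpa [← Nat.card_eq_card_finite_toFinset] using
        Nat.card_le_card_of_injective _ Subtype.val_injective, by simp⟩
  refine ⟨fun h H => ?_, fun h => Nat.sInf_le h⟩
  obtain ⟨S, hS, hSH⟩ := Nat.sInf_mem ⟨_, hne⟩ H
  exact ⟨S, hS.trans h, hSH⟩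

abbrev commutatorModCenter (G : Type*) [Group G] : Type _ :=
  commutator G ⧸ (center G).subgroupOf (commutator G)

section
variable {G : Type*} [Group G]

theorem commute_of_mem_centralizer_commutator {x d : G}
    (hx : x ∈ centralizer (commutator G : Set G)) (hd : d ∈ commutator G) : Commute d x :=
  mem_centralizer_iff.mp hx d hd

theorem commutatorElement_mem_commutator (x g : G) : ⁅x, g⁆ ∈ commutator G :=
  commutator_mem_commutator (mem_top x) (mem_top g)

theorem commutatorElement_mem_centralizer_commutator {x : G}
    (hx : x ∈ centralizer (commutator G : Set G)) (g : G) :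
    ⁅x, g⁆ ∈ centralizer (commutator G : Set G) := by
  rw [commutatorElement_def, mul_assoc, mul_assoc, ← mul_assoc g]
  exact mul_mem hx (Normal.conj_mem inferInstance _ (inv_mem hx) g)

theorem commutatorElement_mul_left_of_mem_centralizer {x y : G}
    (hx : x ∈ centralizer (commutator G : Set G)) (hy : y ∈ centralizer (commutator G : Set G))
    (g : G) : ⁅x * y, g⁆ = ⁅x, g⁆ * ⁅y, g⁆ := by
  have hxy : Commute ⁅y, g⁆ x :=
    commute_of_mem_centralizer_commutator hx (commutatorElement_mem_commutator y g)
  have hyx : Commute ⁅x, g⁆ ⁅y, g⁆ := commute_of_mem_centralizer_commutator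
    (commutatorElement_mem_centralizer_commutator hy g) (commutatorElement_mem_commutator x g)
  calc ⁅x * y, g⁆ = x * ⁅y, g⁆ * x⁻¹ * ⁅x, g⁆ := by group
    _ = ⁅y, g⁆ * ⁅x, g⁆ := by rw [← hxy.eq]; group
    _ = ⁅x, g⁆ * ⁅y, g⁆ := hyx.eq.symm

theorem commute_commutatorElement_of_mem_center {x h : G}
    (hx : x ∈ centralizer (commutator G : Set G)) (hxh : ⁅x, h⁆ ∈ center G) (g : G) :
    Commute h ⁅x, g⁆ := by
  set d := ⁅h, g⁆
  have hd : Commute d x :=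
    commute_of_mem_centralizer_commutator hx (commutatorElement_mem_commutator h g)
  have hdc : Commute d ⁅x, g⁆ := commute_of_mem_centralizer_commutator
    (commutatorElement_mem_centralizer_commutator hx g) (commutatorElement_mem_commutator h g)
  have hc : ∀ y, Commute ⁅x, h⁆⁻¹ y := fun y => (mem_center_iff.mp (inv_mem hxh) y).symm
  -- conjugation by `h` multiplies `x` by a central element and `g` by `d ∈ G'`
  have hconj : h * ⁅x, g⁆ * h⁻¹ = ⁅x, g⁆ :=
    calc h * ⁅x, g⁆ * h⁻¹ = ⁅⁅x, h⁆⁻¹ * x, d * g⁆ := by simp only [d]; group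
      _ = ⁅x, h⁆⁻¹ * (x * (d * g) * x⁻¹) * ⁅x, h⁆ * (d * g)⁻¹ := by group
      _ = ⁅x, d * g⁆ := by rw [(hc _).eq, inv_mul_cancel_right]; group
      _ = x * d * (g * x⁻¹ * g⁻¹ * d⁻¹) := by group
      _ = d * x * (g * x⁻¹ * g⁻¹ * d⁻¹) := by rw [hd.eq]
      _ = d * ⁅x, g⁆ * d⁻¹ := by group
      _ = ⁅x, g⁆ := by rw [hdc.eq, mul_inv_cancel_right]
  exact mul_inv_eq_iff_eq_mul.mp hconj

theorem mem_upperCentralSeries_two_iff {x : G} :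
    x ∈ Subgroup.upperCentralSeries G 2 ↔ ∀ g, ⁅x, g⁆ ∈ center G := by
  rw [Subgroup.mem_upperCentralSeries_succ_iff, Subgroup.upperCentralSeries_one]

def commutatorModCenterHom (g : G) : centralizer (commutator G : Set G) →* commutatorModCenter G :=
  (QuotientGroup.mk' _).comp <| MonoidHom.mk'
    (fun x => ⟨⁅(x : G), g⁆, commutatorElement_mem_commutator _ g⟩)
    fun x y => Subtype.ext (commutatorElement_mul_left_of_mem_centralizer x.2 y.2 g)

theorem commutatorModCenterHom_eq_one_iff {g : G} {x : centralizer (commutator G : Set G)} :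
    commutatorModCenterHom g x = 1 ↔ ⁅(x : G), g⁆ ∈ center G := by
  rw [commutatorModCenterHom, MonoidHom.comp_apply, QuotientGroup.mk'_apply,
    QuotientGroup.eq_one_iff, mem_subgroupOf]
  rfl

variable (G) in
def commutatorOmega (p : ℕ) : Subgroup G where
  carrier := {d | d ∈ centralizer (commutator G : Set G) ∧ d ∈ commutator G ∧ d ^ p ∈ center G}
  one_mem' := ⟨one_mem _, one_mem _, by simp [one_mem]⟩
  mul_mem' := fun ⟨haC, haG, hap⟩ ⟨hbC, hbG, hbp⟩ =>
    ⟨mul_mem haC hbC, mul_mem haG hbG, by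
      rw [(commute_of_mem_centralizer_commutator haC hbG).symm.mul_pow]
      exact mul_mem hap hbp⟩
  inv_mem' := fun ⟨haC, haG, hap⟩ => ⟨inv_mem haC, inv_mem haG, by rw [inv_pow]; exact inv_mem hap⟩

variable (p : ℕ)

def commutatorOmegaImage (s : Set G) : Subgroup (commutatorModCenter G) :=
  ((commutatorOmega G p ⊓ centralizer s).subgroupOf (commutator G)).map (QuotientGroup.mk' _)

theorem mk_mem_commutatorOmegaImage {s : Set G} {y : commutator G}
    (hy : (y : G) ∈ commutatorOmega G p ⊓ centralizer s) :
    (y : commutatorModCenter G) ∈ commutatorOmegaImage p s :=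
  mem_map_of_mem _ (mem_subgroupOf.mpr hy)

theorem commutatorOmegaImage_anti {s t : Set G} (hst : s ⊆ t) :
    commutatorOmegaImage p t ≤ commutatorOmegaImage p s :=
  map_mono fun _ hx => ⟨hx.1, centralizer_le hst hx.2⟩

theorem mk_notMem_commutatorOmegaImage {t : Set G} {u : G} (hu : u ∈ t) {y : commutator G}
    (huy : ¬Commute u y) : (y : commutatorModCenter G) ∉ commutatorOmegaImage p t := by
  rintro ⟨y', hy', hyy'⟩
  have hu' : Commute u y' := mem_centralizer_iff.mp (mem_subgroupOf.mp hy').2 u hu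
  have hz : ((y'⁻¹ * y : commutator G) : G) ∈ center G :=
    mem_subgroupOf.mp (QuotientGroup.eq.mp hyy')
  refine huy ?_
  simpa using hu'.mul_right (mem_center_iff.mp hz u)

theorem card_commutatorOmegaImage_le [Finite G] [Fact p.Prime] {r : ℕ}
    (hA : ∀ H : Subgroup (commutatorModCenter G), Group.rank H ≤ r) (s : Set G) :
    Nat.card (commutatorOmegaImage p s) ≤ p ^ r := by
  refine (card_le_pow_rank _ (Fact.out : p.Prime).pos ?_ ?_).trans
    (Nat.pow_le_pow_right (Fact.out : p.Prime).pos (hA _))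
  · rintro _ ⟨a, ha, rfl⟩ _ ⟨b, hb, rfl⟩
    rw [← map_mul, ← map_mul]
    congr 1
    exact Subtype.ext (commute_of_mem_centralizer_commutator
      (mem_subgroupOf.mp ha).1.1 b.2).symm.eq
  · rintro _ ⟨a, ha, rfl⟩
    rw [← map_pow, QuotientGroup.mk'_apply, QuotientGroup.eq_one_iff, mem_subgroupOf]
    exact (mem_subgroupOf.mp ha).1.2.2

theorem exists_mem_commutatorOmega_inf_centralizer_notMem_center (hp : IsPGroup p G) {s : Set G}
    {x : G} (hx : x ∈ centralizer (commutator G : Set G)) (hxs : ∀ g ∈ s, ⁅x, g⁆ ∈ center G)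
    (hxZ : x ∉ Subgroup.upperCentralSeries G 2) :
    ∃ y ∈ commutatorOmega G p ⊓ centralizer s, y ∉ center G := by
  obtain ⟨v, hv⟩ : ∃ v, ⁅x, v⁆ ∉ center G := by
    simpa [mem_upperCentralSeries_two_iff] using hxZ
  have hvs : ⁅x, v⁆ ∈ centralizer s := mem_centralizer_iff.mpr fun g hg =>
    (commute_commutatorElement_of_mem_center hx (hxs g hg) v).eq
  obtain ⟨m, hm, hmp⟩ := hp.exists_pow_prime_pow_notMem hv
  exact ⟨_, ⟨⟨pow_mem (commutatorElement_mem_centralizer_commutator hx v) _,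
    pow_mem (commutatorElement_mem_commutator x v) _, hmp⟩, pow_mem hvs _⟩, hm⟩

variable (G) in
def DetectsSecondCenter (s : Set G) : Prop :=
  ∀ x ∈ centralizer (commutator G : Set G),
    (∀ g ∈ s, ⁅x, g⁆ ∈ center G) → x ∈ Subgroup.upperCentralSeries G 2

theorem exists_commutatorOmegaImage_insert_lt (hp : IsPGroup p G) {s : Set G}
    (hs : ¬DetectsSecondCenter G s) :
    ∃ u, commutatorOmegaImage p (insert u s) < commutatorOmegaImage p s := by
  obtain ⟨x, hx, hxs, hxZ⟩ : ∃ x ∈ centralizer (commutator G : Set G),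
      (∀ g ∈ s, ⁅x, g⁆ ∈ center G) ∧ x ∉ Subgroup.upperCentralSeries G 2 := by
    simpa [DetectsSecondCenter] using hs
  obtain ⟨y, hy, hyZ⟩ := exists_mem_commutatorOmega_inf_centralizer_notMem_center p hp hx hxs hxZ
  obtain ⟨u, hu⟩ : ∃ u, ¬Commute u y := by
    simpa [mem_center_iff, Commute, SemiconjBy] using hyZ
  exact ⟨u, SetLike.lt_iff_le_and_exists.mpr
    ⟨commutatorOmegaImage_anti p (Set.subset_insert u s), _,
      mk_mem_commutatorOmegaImage p (y := ⟨y, hy.1.2.1⟩) hy,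
      mk_notMem_commutatorOmegaImage p (Set.mem_insert u s) hu⟩⟩

theorem exists_finset_card_le_detectsSecondCenter [Finite G] [Fact p.Prime]
    (hp : IsPGroup p G) {r : ℕ} (hA : ∀ H : Subgroup (commutatorModCenter G), Group.rank H ≤ r) :
    ∃ s : Finset G, s.card ≤ r ∧ DetectsSecondCenter G s := by
  classical
  have hp1 := (Fact.out : p.Prime).one_lt
  suffices ∀ n (s : Finset G), Nat.card (commutatorOmegaImage p (s : Set G)) = n →
      p ^ s.card * n ≤ p ^ r → ∃ t : Finset G, t.card ≤ r ∧ DetectsSecondCenter G t from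
    this _ ∅ rfl (by simpa using card_commutatorOmegaImage_le p hA _)
  intro n
  induction n using Nat.strong_induction_on with
  | _ n ih =>
  intro s hsn hs
  have hn : 0 < n := hsn ▸ Nat.card_pos
  by_cases hcut : DetectsSecondCenter G s
  · exact ⟨s, (Nat.pow_le_pow_iff_right hp1).mp ((Nat.le_mul_of_pos_right _ hn).trans hs), hcut⟩
  obtain ⟨u, hlt⟩ := exists_commutatorOmegaImage_insert_lt p hp hcut
  rw [← Finset.coe_insert] at hlt
  set K := commutatorOmegaImage p ((insert u s : Finset G) : Set G)
  have hK : Nat.card K * p ≤ n :=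
    hsn ▸ ((hp.to_subgroup (commutator G)).to_quotient _).card_mul_le_of_lt hlt
  refine ih (Nat.card K) ?_ (insert u s) rfl ?_
  · nlinarith [Nat.card_pos (α := K)]
  · calc p ^ (insert u s).card * Nat.card K ≤ p ^ (s.card + 1) * Nat.card K :=
          Nat.mul_le_mul_right _ (Nat.pow_le_pow_right (by omega) (Finset.card_insert_le u s))
      _ = p ^ s.card * (Nat.card K * p) := by ring
      _ ≤ p ^ s.card * n := Nat.mul_le_mul_left _ hK
      _ ≤ p ^ r := hs
end

theorem stmt_18 (p : ℕ) [Fact p.Prime] (G : Type*) [Group G] [Finite G]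
    (hp : IsPGroup p G) (r : ℕ)
    (hr : grpRank (commutator G ⧸ (Subgroup.center G).subgroupOf (commutator G)) = r) :
    grpRank (Subgroup.centralizer (commutator G : Set G) ⧸
        (Subgroup.upperCentralSeries G 2).subgroupOf (Subgroup.centralizer (commutator G : Set G))) ≤
      r ^ 2 := by
  have hA : ∀ H : Subgroup (commutatorModCenter G), Group.rank H ≤ r := grpRank_le_iff.mp hr.le
  obtain ⟨s, hsr, hs⟩ := exists_finset_card_le_detectsSecondCenter p hp hA
  let Ψ : centralizer (commutator G : Set G) →* (s → commutatorModCenter G) :=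
    MonoidHom.pi fun g => commutatorModCenterHom (g : G)
  have hker : (Subgroup.upperCentralSeries G 2).subgroupOf (centralizer _) = Ψ.ker := by
    ext x
    simp only [mem_subgroupOf, MonoidHom.mem_ker, funext_iff, Ψ, MonoidHom.pi_apply,
      Pi.one_apply, commutatorModCenterHom_eq_one_iff, Subtype.forall]
    exact ⟨fun hx g _ => mem_upperCentralSeries_two_iff.mp hx g, hs x x.2⟩
  let f := (QuotientGroup.kerLift Ψ).comp (QuotientGroup.quotientMulEquivOfEq hker).toMonoidHom
  have hf : Function.Injective f :=
    (QuotientGroup.kerLift_injective Ψ).comp (QuotientGroup.quotientMulEquivOfEq hker).injective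
  refine grpRank_le_iff.mpr fun H => ?_
  calc Group.rank H ≤ Nat.card s * r :=
        Group.rank_le_of_injective (f := f.comp H.subtype) (hf.comp Subtype.val_injective)
          (Group.rank_subgroup_pi_le hA)
    _ ≤ r ^ 2 := by rw [Nat.card_eq_finsetCard, sq]; exact Nat.mul_le_mul_right r hsr
end
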